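/- Let e ≥ 3, let ζ be a primitive 2^e-th root of unity, and let i = ζ^{2^{e-2}}. Then the ring of integers of the field ℚ(i(ζ + ζ^{-1})) equals ℤ[i(ζ + ζ^{-1})]. -/

import Mathlib

/-!
Put `ξ = iζ = ζ ^ (2 ^ (e - 2) + 1)`, again a primitive `2 ^ e`-th root of unity, and
`η = ξ - ξ⁻¹ = i(ζ + ζ⁻¹)`. Then `ξ² = ηξ + 1`, so `ℤ[ξ] = ℤ[η] + ℤ[η]ξ`, and `ℤ[ξ]` is the ring of
integers of `ℚ(ξ)`. An integer `x` of `ℚ(η)` is therefore `a + bξ` with `a, b ∈ ℤ[η]`, and `b = 0`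
because `ξ ∉ ℚ(η)`: the conjugate `-ξ⁻¹ ≠ ξ` of `ξ` has the same image `η` under `ω ↦ ω - ω⁻¹`.
-/

open IntermediateField Polynomial

namespace IntermediateField

variable {F E : Type*} [Field F] [Field E] [Algebra F E]

theorem exists_aeval_eq_of_mem_adjoin_simple {α x : E} (hα : IsAlgebraic F α) (hx : x ∈ F⟮α⟯) :
    ∃ p : F[X], aeval α p = x := by
  rwa [← mem_toSubalgebra, adjoin_simple_toSubalgebra_of_isAlgebraic hα,
    Algebra.adjoin_singleton_eq_range_aeval] at hx

theorem adjoin_int_le (S : Set E) :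
    Algebra.adjoin ℤ S ≤ (adjoin F S).toSubalgebra.restrictScalars ℤ :=
  Algebra.adjoin_le (subset_adjoin F S)

end IntermediateField

theorem Algebra.exists_add_mul_of_mem_adjoin_of_sq_eq {R A : Type*} [CommRing R] [CommRing A]
    [Algebra R A] {ξ η : A} (hsq : ξ ^ 2 = η * ξ + 1) {y : A} (hy : y ∈ adjoin R {ξ}) :
    ∃ a ∈ adjoin R {η}, ∃ b ∈ adjoin R {η}, y = a + b * ξ := by
  induction hy using Algebra.adjoin_induction with
  | mem z hz => exact ⟨0, zero_mem _, 1, one_mem _, by simp [Set.mem_singleton_iff.mp hz]⟩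
  | algebraMap r => exact ⟨algebraMap R A r, Subalgebra.algebraMap_mem _ _, 0, zero_mem _, by ring⟩
  | add u v _ _ ihu ihv =>
    obtain ⟨a, ha, b, hb, rfl⟩ := ihu
    obtain ⟨c, hc, d, hd, rfl⟩ := ihv
    exact ⟨a + c, add_mem ha hc, b + d, add_mem hb hd, by ring⟩
  | mul u v _ _ ihu ihv =>
    obtain ⟨a, ha, b, hb, rfl⟩ := ihu
    obtain ⟨c, hc, d, hd, rfl⟩ := ihv
    refine ⟨a * c + b * d, add_mem (mul_mem ha hc) (mul_mem hb hd), a * d + b * c + b * d * η,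
      add_mem (add_mem (mul_mem ha hd) (mul_mem hb hc))
        (mul_mem (mul_mem hb hd) (self_mem_adjoin_singleton R η)), ?_⟩
    linear_combination (b * d) * hsq

theorem mem_adjoin_int_of_sq_eq_of_notMem {F E : Type*} [Field F] [Field E] [Algebra F E]
    {ξ η : E} (hsq : ξ ^ 2 = η * ξ + 1) (hξ : ξ ∉ F⟮η⟯) {x : E} (hxF : x ∈ F⟮η⟯)
    (hxξ : x ∈ Algebra.adjoin ℤ {ξ}) : x ∈ Algebra.adjoin ℤ {η} := by
  obtain ⟨a, ha, b, hb, rfl⟩ := Algebra.exists_add_mul_of_mem_adjoin_of_sq_eq hsq hxξ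
  have haF : a ∈ F⟮η⟯ := adjoin_int_le {η} ha
  have hbF : b ∈ F⟮η⟯ := adjoin_int_le {η} hb
  obtain rfl : b = 0 := by
    by_contra hb0
    refine hξ ?_
    rw [show ξ = b⁻¹ * (a + b * ξ - a) by field_simp; ring]
    exact mul_mem (inv_mem hbF) (sub_mem hxF haF)
  simpa using ha

namespace IsPrimitiveRoot

theorem pow_of_odd {M : Type*} [CommMonoid M] {ξ : M} {e k : ℕ}
    (hξ : IsPrimitiveRoot ξ (2 ^ e)) (hk : Odd k) : IsPrimitiveRoot (ξ ^ k) (2 ^ e) :=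
  hξ.pow_of_coprime k (Nat.Coprime.pow_right _ (Nat.coprime_two_right.2 hk))

theorem inv_eq_pow_pred {G : Type*} [DivisionCommMonoid G] {ξ : G} {n : ℕ}
    (hξ : IsPrimitiveRoot ξ n) (hn : n ≠ 0) : ξ⁻¹ = ξ ^ (n - 1) :=
  inv_eq_of_mul_eq_one_right <| by
    rw [← pow_succ', Nat.sub_add_cancel (Nat.one_le_iff_ne_zero.2 hn), hξ.pow_eq_one]

theorem pow_two_pow_pred_eq_neg_one {R : Type*} [CommRing R] [NoZeroDivisors R] {ξ : R} {e : ℕ}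
    (hξ : IsPrimitiveRoot ξ (2 ^ e)) (he : 1 ≤ e) : ξ ^ 2 ^ (e - 1) = -1 := by
  refine (hξ.pow (by positivity) ?_).eq_neg_one_of_two_right
  rw [← pow_succ, Nat.sub_add_cancel he]

variable {K : Type*} [Field K] {ξ : K}

theorem neg_inv {e : ℕ} (hξ : IsPrimitiveRoot ξ (2 ^ e)) (he : 2 ≤ e) :
    IsPrimitiveRoot (-ξ⁻¹) (2 ^ e) := by
  have hodd : Odd (2 ^ (e - 1) + 1) := (Nat.even_pow.2 ⟨even_two, by omega⟩).add_one
  have h := (hξ.pow_of_odd hodd).inv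
  rwa [pow_succ, hξ.pow_two_pow_pred_eq_neg_one (by omega), neg_one_mul, inv_neg] at h

variable [CharZero K]

theorem aeval_eq_of_aeval_eq {n : ℕ} (hn : 0 < n) {ξ' : K} (hξ : IsPrimitiveRoot ξ n)
    (hξ' : IsPrimitiveRoot ξ' n) {f g : ℚ[X]} (h : aeval ξ f = aeval ξ g) :
    aeval ξ' f = aeval ξ' g := by
  have hmin : minpoly ℚ ξ' = minpoly ℚ ξ := by
    rw [← cyclotomic_eq_minpoly_rat hξ hn, ← cyclotomic_eq_minpoly_rat hξ' hn]
  rw [← sub_eq_zero, ← map_sub, ← minpoly.dvd_iff, hmin, minpoly.dvd_iff, map_sub, h, sub_self]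

theorem notMem_adjoin_sub_inv {e : ℕ} (hξ : IsPrimitiveRoot ξ (2 ^ e)) (he : 3 ≤ e) :
    ξ ∉ ℚ⟮ξ - ξ⁻¹⟯ := by
  intro hmem
  have hn : 0 < 2 ^ e := by positivity
  have hint : IsIntegral ℚ (ξ - ξ⁻¹) :=
    ((hξ.isIntegral hn).sub (hξ.inv.isIntegral hn)).tower_top
  obtain ⟨p, hp⟩ := exists_aeval_eq_of_mem_adjoin_simple hint.isAlgebraic hmem
  have hcomp : ∀ {ω : K}, IsPrimitiveRoot ω (2 ^ e) →
      aeval ω (p.comp (X - X ^ (2 ^ e - 1))) = aeval (ω - ω⁻¹) p := fun hω => by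
    simp [aeval_comp, hω.inv_eq_pow_pred hn.ne']
  have hξ' := hξ.neg_inv (by omega)
  have key := hξ.aeval_eq_of_aeval_eq hn hξ' (f := p.comp (X - X ^ (2 ^ e - 1))) (g := X)
    (by rw [hcomp hξ, hp, aeval_X])
  rw [hcomp hξ', aeval_X, inv_neg, inv_inv, neg_sub_neg, hp] at key
  have hsq : ξ ^ 2 = -1 := by
    have := hξ.ne_zero hn.ne'
    field_simp at key
    linear_combination key
  have h4 : 2 ^ e ∣ 4 :=
    hξ.dvd_of_pow_eq_one 4 (by rw [show 4 = 2 * 2 by rfl, pow_mul, hsq]; norm_num)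
  have := Nat.le_of_dvd (by norm_num) h4
  have : 2 ^ 3 ≤ 2 ^ e := Nat.pow_le_pow_right (by norm_num) he
  omega

theorem mem_adjoin_int_of_isIntegral {n : ℕ} [NeZero n] (hξ : IsPrimitiveRoot ξ n) {x : K}
    (hx : x ∈ ℚ⟮ξ⟯) (hint : IsIntegral ℤ x) : x ∈ Algebra.adjoin ℤ {ξ} := by
  have : IsCyclotomicExtension {n} ℚ ℚ⟮ξ⟯ :=
    (hξ.adjoin_isCyclotomicExtension ℚ).equiv _ _ _ (Subalgebra.equivOfEq _ _
      (adjoin_simple_toSubalgebra_of_isAlgebraic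
        (hξ.isIntegral (NeZero.pos n)).tower_top.isAlgebraic).symm)
  have hgen : IsPrimitiveRoot (AdjoinSimple.gen ℚ ξ) n := coe_submonoidClass_iff.mp hξ
  obtain ⟨y, hy⟩ :=
    (IsCyclotomicExtension.Rat.isIntegralClosure_adjoin_singleton hgen).isIntegral_iff.mp
      ((isIntegral_algebraMap_iff (x := (⟨x, hx⟩ : ℚ⟮ξ⟯)) (algebraMap ℚ⟮ξ⟯ K).injective).mp hint)
  have := (Subalgebra.mem_map (f := IsScalarTower.toAlgHom ℤ ℚ⟮ξ⟯ K)).2 ⟨_, y.2, rfl⟩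
  rwa [AlgHom.map_adjoin_singleton, IsScalarTower.coe_toAlgHom',
    show algebraMap ℚ⟮ξ⟯ K y = x from congrArg Subtype.val hy] at this

theorem mem_adjoin_int_sub_inv_iff {e : ℕ} (hξ : IsPrimitiveRoot ξ (2 ^ e)) (he : 3 ≤ e)
    {x : K} : x ∈ Algebra.adjoin ℤ {ξ - ξ⁻¹} ↔ x ∈ ℚ⟮ξ - ξ⁻¹⟯ ∧ IsIntegral ℤ x := by
  have hn : 0 < 2 ^ e := by positivity
  constructor
  · intro hx
    have hint : IsIntegral ℤ (ξ - ξ⁻¹) := (hξ.isIntegral hn).sub (hξ.inv.isIntegral hn)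
    exact ⟨adjoin_int_le _ hx,
      Algebra.adjoin_le (S := integralClosure ℤ K) (Set.singleton_subset_iff.2 hint) hx⟩
  · rintro ⟨hxη, hint⟩
    have hsq : ξ ^ 2 = (ξ - ξ⁻¹) * ξ + 1 := by
      have := hξ.ne_zero hn.ne'
      field_simp
      ring
    have hηξ : ℚ⟮ξ - ξ⁻¹⟯ ≤ ℚ⟮ξ⟯ := adjoin_simple_le_iff.2 <|
      sub_mem (mem_adjoin_simple_self ℚ ξ) (inv_mem (mem_adjoin_simple_self ℚ ξ))
    exact mem_adjoin_int_of_sq_eq_of_notMem hsq (hξ.notMem_adjoin_sub_inv he) hxη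
      (hξ.mem_adjoin_int_of_isIntegral (hηξ hxη) hint)

end IsPrimitiveRoot

/-- For `e ≥ 3`, `ζ` a primitive `2^e`-th root of unity and
`i = ζ^(2^(e-2))`, the ring of integers of `ℚ(i(ζ + ζ⁻¹))` is `ℤ[i(ζ + ζ⁻¹)]`. -/
theorem ringOfIntegers_of_i_mul_zeta_add_zeta_inv
    (e : ℕ) (he : 3 ≤ e) (ζ : ℂ) (hζ : IsPrimitiveRoot ζ (2 ^ e)) :
    {x : ℂ | x ∈ ℚ⟮ζ ^ 2 ^ (e - 2) * (ζ + ζ⁻¹)⟯ ∧ IsIntegral ℤ x} =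
      (Algebra.adjoin ℤ {ζ ^ 2 ^ (e - 2) * (ζ + ζ⁻¹)} : Subalgebra ℤ ℂ) := by
  set i := ζ ^ 2 ^ (e - 2)
  have hi : i * i = -1 := by
    rw [← pow_add, ← two_mul, ← pow_succ', show e - 2 + 1 = e - 1 by omega]
    exact hζ.pow_two_pow_pred_eq_neg_one (by omega)
  have hξ : IsPrimitiveRoot (i * ζ) (2 ^ e) := by
    simpa only [pow_succ] using hζ.pow_of_odd (Nat.even_pow.2 ⟨even_two, by omega⟩).add_one
  have hη : i * (ζ + ζ⁻¹) = i * ζ - (i * ζ)⁻¹ := by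
    have hi' : i⁻¹ = -i := inv_eq_of_mul_eq_one_right (by rw [mul_neg, hi, neg_neg])
    rw [mul_inv, hi']
    ring
  ext x
  rw [Set.mem_ofPred_eq, SetLike.mem_coe, hη, hξ.mem_adjoin_int_sub_inv_iff he]
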